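/- Let I = I(G) be the edge ideal of a finite simple graph G. If v(I) ≥ 2, then there exists a vertex t_i of G with v(I : t_i) < v(I), where (I : t_i) = { g ∈ S : g·t_i ∈ I }. -/

import Mathlib

open MvPolynomial

attribute [local instance] Classical.propDecidable

/-- The v-number of a graded ideal `I` of a polynomial ring: the least `d ≥ 1` such that
there is a homogeneous polynomial `f` of degree `d` and an associated prime `p` of `S/I`
with `(I : f) = p`; by convention it is `0` when `I` is the ideal generated by the variables. -/
noncomputable def vNumber {K : Type*} [Field K] {σ : Type*}
    (I : Ideal (MvPolynomial σ K)) : ℕ :=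
  if I = Ideal.span (Set.range (X : σ → MvPolynomial σ K)) then 0
  else sInf {d : ℕ | 1 ≤ d ∧ ∃ f : MvPolynomial σ K, f.IsHomogeneous d ∧
    ∃ p ∈ associatedPrimes (MvPolynomial σ K) (MvPolynomial σ K ⧸ I),
      Submodule.colon I (Ideal.span {f}) = p}

/-- A squarefree monomial ideal: an ideal generated by squarefree monomials,
i.e. by products of distinct variables. -/
def IsSquarefreeMonomialIdeal {K : Type*} [Field K] {σ : Type*}
    (I : Ideal (MvPolynomial σ K)) : Prop :=
  ∃ E : Set (Finset σ), I = Ideal.span ((fun e : Finset σ => ∏ i ∈ e, X i) '' E)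

/-- A clutter on the vertex set `Fin s`: a family of edges, none of which contains another. -/
structure Clutter (s : ℕ) where
  edges : Finset (Finset (Fin s))
  antichain : ∀ e ∈ edges, ∀ f ∈ edges, e ⊆ f → e = f

namespace Clutter

variable {s : ℕ} (C : Clutter s)

/-- The edge ideal of a clutter. -/
noncomputable def edgeIdeal (K : Type*) [Field K] : Ideal (MvPolynomial (Fin s) K) :=
  Ideal.span ((fun e : Finset (Fin s) => ∏ i ∈ e, X i) '' C.edges)

/-- A stable (independent) set of a clutter: a set of vertices containing no edge. -/
def Stable (A : Finset (Fin s)) : Prop := ∀ e ∈ C.edges, ¬ (e ⊆ A)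

/-- A maximal stable set of a clutter. -/
def MaximalStable (A : Finset (Fin s)) : Prop :=
  C.Stable A ∧ ∀ B : Finset (Fin s), C.Stable B → A ⊆ B → A = B

/-- The neighbor set `N_C(A)`: all vertices `i` such that `{i} ∪ A` contains an edge. -/
noncomputable def neighborSet (A : Finset (Fin s)) : Finset (Fin s) :=
  Finset.univ.filter (fun i => ∃ e ∈ C.edges, e ⊆ insert i A)

/-- A vertex cover of a clutter: a set of vertices meeting every edge. -/
def IsVertexCover (B : Finset (Fin s)) : Prop := ∀ e ∈ C.edges, ∃ i ∈ e, i ∈ B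

/-- A minimal vertex cover: a vertex cover minimal with respect to inclusion. -/
def IsMinimalVertexCover (B : Finset (Fin s)) : Prop :=
  C.IsVertexCover B ∧ ∀ B' ⊂ B, ¬ C.IsVertexCover B'

/-- The independence number `β₀(C)`: the maximum size of a stable set. -/
noncomputable def indepNum : ℕ := sSup {n : ℕ | ∃ A : Finset (Fin s), C.Stable A ∧ A.card = n}

/-- The independent domination number `i(C)`: the minimum size of a maximal stable set. -/
noncomputable def idomNum : ℕ :=
  sInf {n : ℕ | ∃ A : Finset (Fin s), C.MaximalStable A ∧ A.card = n}

/-- The vertex covering number `α₀(C)`: the minimum size of a vertex cover. -/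
noncomputable def coverNum : ℕ :=
  sInf {n : ℕ | ∃ B : Finset (Fin s), C.IsVertexCover B ∧ B.card = n}

/-- The ideal of covers of a clutter, generated by the monomials of the minimal vertex covers. -/
noncomputable def coverIdeal (K : Type*) [Field K] : Ideal (MvPolynomial (Fin s) K) :=
  Ideal.span ((fun B : Finset (Fin s) => ∏ i ∈ B, X i) '' {B | C.IsMinimalVertexCover B})

/-- The clutter is well-covered if every maximal stable set has maximum cardinality `β₀(C)`. -/
def WellCovered : Prop := ∀ A : Finset (Fin s), C.MaximalStable A → A.card = C.indepNum

/-- Deletion of an edge from a clutter. -/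
def deleteEdge (e : Finset (Fin s)) : Clutter s :=
  ⟨C.edges.erase e, fun a ha b hb hab =>
    C.antichain a (Finset.mem_of_mem_erase ha) b (Finset.mem_of_mem_erase hb) hab⟩

/-- An edge-critical clutter: deleting any edge increases the independence number. -/
def EdgeCritical : Prop := ∀ e ∈ C.edges, C.indepNum < (C.deleteEdge e).indepNum

end Clutter

section Graphs

variable {V : Type*}

/-- The edge ideal of a simple graph. -/
noncomputable def gEdgeIdeal (K : Type*) [Field K] (G : SimpleGraph V) :
    Ideal (MvPolynomial V K) :=
  Ideal.span {m : MvPolynomial V K | ∃ i j : V, G.Adj i j ∧ m = X i * X j}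

/-- A stable (independent) set of vertices of a graph. -/
def gStable (G : SimpleGraph V) (A : Finset V) : Prop := ∀ i ∈ A, ∀ j ∈ A, ¬ G.Adj i j

/-- A maximal stable set of a graph. -/
def gMaximalStable (G : SimpleGraph V) (A : Finset V) : Prop :=
  gStable G A ∧ ∀ B : Finset V, gStable G B → A ⊆ B → A = B

/-- The independence number `β₀(G)`. -/
noncomputable def gIndepNum [Fintype V] (G : SimpleGraph V) : ℕ :=
  sSup {n : ℕ | ∃ A : Finset V, gStable G A ∧ A.card = n}

/-- A maximum stable set: a stable set of maximum cardinality `β₀(G)`. -/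
def gMaximumStable [Fintype V] (G : SimpleGraph V) (A : Finset V) : Prop :=
  gStable G A ∧ A.card = gIndepNum G

/-- The independent domination number `i(G)`: minimum size of a maximal stable set. -/
noncomputable def gIdomNum (G : SimpleGraph V) : ℕ :=
  sInf {n : ℕ | ∃ A : Finset V, gMaximalStable G A ∧ A.card = n}

/-- A well-covered graph: every maximal stable set is a maximum stable set. -/
def gWellCovered [Fintype V] (G : SimpleGraph V) : Prop :=
  ∀ A : Finset V, gMaximalStable G A → A.card = gIndepNum G

/-- The class `W₂`: graphs with at least two vertices in which any two disjoint stable sets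
are contained in two disjoint maximum stable sets. -/
def W2 [Fintype V] (G : SimpleGraph V) : Prop :=
  2 ≤ Fintype.card V ∧ ∀ A B : Finset V, gStable G A → gStable G B → Disjoint A B →
    ∃ A' B' : Finset V, gMaximumStable G A' ∧ gMaximumStable G B' ∧ Disjoint A' B' ∧
      A ⊆ A' ∧ B ⊆ B'

/-- The neighbor set of a set of vertices of a graph: all vertices adjacent to a vertex of `A`. -/
noncomputable def gNeighborSet [Fintype V] (G : SimpleGraph V) (A : Finset V) : Finset V :=
  Finset.univ.filter (fun i => ∃ j ∈ A, G.Adj i j)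

/-- A vertex cover of a graph. -/
def gIsVertexCover (G : SimpleGraph V) (B : Finset V) : Prop :=
  ∀ i j : V, G.Adj i j → i ∈ B ∨ j ∈ B

/-- A minimal vertex cover of a graph. -/
def gIsMinimalVertexCover (G : SimpleGraph V) (B : Finset V) : Prop :=
  gIsVertexCover G B ∧ ∀ B' ⊂ B, ¬ gIsVertexCover G B'

/-- An edge-critical graph: deleting any edge increases the independence number. -/
def gEdgeCritical [Fintype V] (G : SimpleGraph V) : Prop :=
  ∀ i j : V, G.Adj i j → gIndepNum G < gIndepNum (G.deleteEdges {s(i, j)})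

end Graphs

/-! If `v(I) = d ≥ 2` is attained by `(I : f) = 𝔭`, then, `I` being a radical monomial ideal,
`𝔭` is generated by the variables it contains, so every monomial `t^u` of `f` satisfies
`𝔭 ⊆ (I : t^u)`; prime avoidance then yields one with `(I : t^u) = 𝔭`. Writing
`t^u = t_i t^{u'}` gives `((I : t_i) : t^{u'}) = 𝔭` with `deg t^{u'} = d - 1`, hence
`v(I : t_i) ≤ d - 1`. -/

namespace Ideal

variable {R : Type*} [CommRing R]

theorem colon_span_singleton_colon_span_singleton (J : Ideal R) (a b : R) :
    (J.colon (span {a})).colon (span {b}) = J.colon (span {a * b}) := by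
  ext r
  simp only [mem_colon_span_singleton, mul_assoc, mul_comm b a]

theorem mem_associatedPrimes_of_colon_span_singleton_eq {J p : Ideal R} {g : R}
    (hp : p.IsPrime) (h : J.colon (span {g}) = p) : p ∈ associatedPrimes R (R ⧸ J) := by
  refine ⟨hp, Quotient.mk J g, ?_⟩
  suffices hc : p = (⊥ : Submodule R (R ⧸ J)).colon {Quotient.mk J g} by
    rw [← hc, hp.radical]
  ext r
  rw [Submodule.mem_colon_singleton, ← h, mem_colon_span_singleton, Submodule.mem_bot]
  exact Quotient.eq_zero_iff_mem.symm

end Ideal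

namespace MvPolynomial

variable {σ R : Type*} [CommRing R]

theorem inf_colon_monomial_le_colon (J : Ideal (MvPolynomial σ R)) (f : MvPolynomial σ R) :
    (f.support.inf fun u => J.colon (Ideal.span {monomial u (1 : R)})) ≤
      J.colon (Ideal.span {f}) := by
  intro r hr
  rw [Ideal.mem_colon_span_singleton, f.as_sum, Finset.mul_sum]
  refine J.sum_mem fun u hu => ?_
  have hru : r * monomial u 1 ∈ J := Ideal.mem_colon_span_singleton.mp
    (Finset.inf_le (f := fun u => J.colon (Ideal.span {monomial u (1 : R)})) hu hr)
  rw [← mul_one (coeff u f), ← C_mul_monomial, mul_left_comm]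
  exact J.mul_mem_left _ hru

section KillVars

noncomputable def killVars (C : Set σ) : MvPolynomial σ R →ₐ[R] MvPolynomial σ R :=
  aeval fun j => if j ∈ C then 0 else X j

theorem sub_killVars_mem_span_X_image (C : Set σ) (h : MvPolynomial σ R) :
    h - killVars C h ∈ Ideal.span (X '' C) := by
  induction h using MvPolynomial.induction_on with
  | C a => simp [killVars]
  | add p q hp hq => simpa only [map_add, add_sub_add_comm] using add_mem hp hq
  | mul_X p i hp =>
    rw [map_mul, show p * X i - killVars C p * killVars C (X i) =
      (p - killVars C p) * X i + killVars C p * (X i - killVars C (X i)) by ring]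
    refine add_mem (Ideal.mul_mem_right _ _ hp) (Ideal.mul_mem_left _ _ ?_)
    by_cases hi : i ∈ C
    · simpa [killVars, hi] using
        (Ideal.subset_span ⟨i, hi, rfl⟩ : X i ∈ Ideal.span (X '' C : Set (MvPolynomial σ R)))
    · simp [killVars, hi]

theorem ker_killVars (C : Set σ) :
    RingHom.ker (killVars (R := R) C) = Ideal.span (X '' C) := by
  refine le_antisymm (fun h h0 => ?_) (Ideal.span_le.mpr ?_)
  · simpa [(RingHom.mem_ker).mp h0] using sub_killVars_mem_span_X_image C h
  · rintro _ ⟨j, hj, rfl⟩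
    simp [killVars, hj]

theorem isPrime_span_X_image [IsDomain R] (C : Set σ) :
    (Ideal.span (X '' C : Set (MvPolynomial σ R))).IsPrime := by
  rw [← ker_killVars]
  exact RingHom.ker_isPrime _

end KillVars

section MonomialIdeal

variable (R) in
noncomputable def monomialIdeal (E : Set (σ →₀ ℕ)) : Ideal (MvPolynomial σ R) :=
  Ideal.span ((fun u => monomial u 1) '' E)

variable {E : Set (σ →₀ ℕ)}

theorem mem_monomialIdeal {g : MvPolynomial σ R} :
    g ∈ monomialIdeal R E ↔ ∀ v ∈ g.support, ∃ u ∈ E, u ≤ v :=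
  mem_ideal_span_monomial_image

theorem monomial_mem_monomialIdeal_of_mem_support {g : MvPolynomial σ R}
    (hg : g ∈ monomialIdeal R E) {v : σ →₀ ℕ} (hv : v ∈ g.support) :
    monomial v 1 ∈ monomialIdeal R E :=
  mem_monomialIdeal.mpr fun _ hw => Finset.mem_singleton.mp (support_monomial_subset hw) ▸
    mem_monomialIdeal.mp hg v hv

theorem X_mul_monomial_mem_monomialIdeal {f : MvPolynomial σ R} {j : σ}
    (hf : X j * f ∈ monomialIdeal R E) {u : σ →₀ ℕ} (hu : u ∈ f.support) :
    X j * monomial u 1 ∈ monomialIdeal R E := by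
  rw [X, monomial_mul, one_mul]
  refine monomial_mem_monomialIdeal_of_mem_support hf ?_
  rw [support_X_mul]
  exact Finset.mem_map_of_mem _ hu

theorem monomialIdeal_le_span_X_of_le {p : Ideal (MvPolynomial σ R)} (hp : p.IsPrime)
    (h : monomialIdeal R E ≤ p) : monomialIdeal R E ≤ Ideal.span (X '' {j | X j ∈ p}) := by
  refine Ideal.span_le.mpr ?_
  rintro _ ⟨u, hu, rfl⟩
  have hu : monomial u 1 ∈ p := h (Ideal.subset_span ⟨u, hu, rfl⟩)
  rw [monomial_eq, C_1, one_mul, Finsupp.prod] at hu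
  obtain ⟨j, hj, hjp⟩ := hp.prod_mem_iff.mp hu
  exact mem_ideal_span_X_image.mpr fun v hv =>
    ⟨j, hp.mem_of_pow_mem _ hjp, Finset.mem_singleton.mp (support_monomial_subset hv) ▸
      Finsupp.mem_support_iff.mp hj⟩

/-- If no generator divides `t^v` with `v ∈ supp g`, squarefreeness puts every generator, hence
`gⁿ` and then `g`, in the prime generated by the variables missing from `t^v`: absurd. -/
theorem isRadical_monomialIdeal [IsDomain R] (hE : ∀ u ∈ E, ∀ j, u j ≤ 1) :
    (monomialIdeal R E).IsRadical := by
  rintro g ⟨n, hn⟩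
  refine mem_monomialIdeal.mpr fun v hv => ?_
  by_contra! hdiv
  have hle : monomialIdeal R E ≤ Ideal.span (X '' {j | v j = 0}) := by
    refine Ideal.span_le.mpr ?_
    rintro _ ⟨u, hu, rfl⟩
    obtain ⟨j, hj⟩ : ∃ j, v j < u j := by
      by_contra! hvu
      exact hdiv u hu (Finsupp.le_def.mpr hvu)
    refine mem_ideal_span_X_image.mpr fun w hw => ?_
    rw [Finset.mem_singleton.mp (support_monomial_subset hw)]
    exact ⟨j, show v j = 0 by have := hE u hu j; omega, by omega⟩
  obtain ⟨j, hj, hvj⟩ :=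
    mem_ideal_span_X_image.mp ((isPrime_span_X_image _).mem_of_pow_mem n (hle hn)) v hv
  exact hvj hj

variable [IsDomain R] {f : MvPolynomial σ R} {p : Ideal (MvPolynomial σ R)}

theorem span_X_eq_of_colon_eq (hI : (monomialIdeal R E).IsRadical) (hp : p.IsPrime)
    (h : (monomialIdeal R E).colon (Ideal.span {f}) = p) :
    Ideal.span (X '' {j | X j ∈ p}) = p := by
  set q := Ideal.span (X '' {j | X j ∈ p} : Set (MvPolynomial σ R))
  have hIp : monomialIdeal R E ≤ p := h ▸ Ideal.le_colon
  have hfI : f ∉ monomialIdeal R E := fun hf => hp.ne_top <| by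
    rw [← h, Submodule.colon_eq_top_iff_subset, SetLike.coe_subset_coe,
      Ideal.span_singleton_le_iff_mem]
    exact hf
  have hqp : q ≤ p := Ideal.span_le.mpr fun _ ⟨_, hj, e⟩ => e ▸ hj
  have hIq : monomialIdeal R E ≤ q := monomialIdeal_le_span_X_of_le hp hIp
  -- `f ∈ q ⊆ (I : f)` would give `f² ∈ I`
  have hfq : f ∉ q := fun hfq => hfI <| hI
    ⟨2, pow_two f ▸ Ideal.mem_colon_span_singleton.mp (h ▸ hqp hfq)⟩
  refine le_antisymm hqp fun r hr => ?_
  have hrf : r * f ∈ q := hIq (Ideal.mem_colon_span_singleton.mp (h ▸ hr))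
  exact ((isPrime_span_X_image _).mem_or_mem hrf).resolve_right hfq

theorem exists_mem_support_colon_monomial_eq (hI : (monomialIdeal R E).IsRadical)
    (hp : p.IsPrime) (h : (monomialIdeal R E).colon (Ideal.span {f}) = p) :
    ∃ u ∈ f.support, (monomialIdeal R E).colon (Ideal.span {monomial u (1 : R)}) = p := by
  have hle : ∀ u ∈ f.support,
      p ≤ (monomialIdeal R E).colon (Ideal.span {monomial u (1 : R)}) := by
    intro u hu
    rw [← span_X_eq_of_colon_eq hI hp h, Ideal.span_le]
    rintro _ ⟨j, hj, rfl⟩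
    have hjf : X j * f ∈ monomialIdeal R E := Ideal.mem_colon_span_singleton.mp (h ▸ hj)
    exact Ideal.mem_colon_span_singleton.mpr (X_mul_monomial_mem_monomialIdeal hjf hu)
  obtain ⟨u, hu, hup⟩ := hp.inf_le'.mp (h ▸ inf_colon_monomial_le_colon _ f)
  exact ⟨u, hu, le_antisymm hup (hle u hu)⟩

end MonomialIdeal

end MvPolynomial

section VNumber

variable {σ K : Type*} [Field K]

theorem exists_isHomogeneous_colon_eq_of_vNumber_ne_zero {I : Ideal (MvPolynomial σ K)}
    (h : vNumber I ≠ 0) :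
    ∃ f : MvPolynomial σ K, f.IsHomogeneous (vNumber I) ∧
      ∃ p ∈ associatedPrimes (MvPolynomial σ K) (MvPolynomial σ K ⧸ I),
        I.colon (Ideal.span {f}) = p := by
  unfold vNumber at h ⊢
  split_ifs at h ⊢
  · exact absurd rfl h
  · exact (Nat.sInf_mem (Nat.nonempty_of_pos_sInf (Nat.pos_of_ne_zero h))).2

theorem vNumber_le_of_colon_eq {J p : Ideal (MvPolynomial σ K)} {g : MvPolynomial σ K} {d : ℕ}
    (hd : 1 ≤ d) (hg : g.IsHomogeneous d) (hp : p.IsPrime) (h : J.colon (Ideal.span {g}) = p) :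
    vNumber J ≤ d := by
  unfold vNumber
  split_ifs
  · exact Nat.zero_le d
  · exact Nat.sInf_le
      ⟨hd, g, hg, p, Ideal.mem_associatedPrimes_of_colon_span_singleton_eq hp h, h⟩

theorem vNumber_colon_X_lt_degree {J p : Ideal (MvPolynomial σ K)} {u : σ →₀ ℕ} {i : σ}
    (hp : p.IsPrime) (hJ : J.colon (Ideal.span {monomial u (1 : K)}) = p) (hi : u i ≠ 0)
    (hu : 2 ≤ u.degree) :
    vNumber (J.colon (Ideal.span {(X i : MvPolynomial σ K)})) < u.degree := by
  obtain ⟨u', rfl⟩ : ∃ u', u = Finsupp.single i 1 + u' :=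
    ⟨u - Finsupp.single i 1,
      (add_tsub_cancel_of_le (Finsupp.single_le_iff.mpr (Nat.one_le_iff_ne_zero.mpr hi))).symm⟩
  rw [map_add, Finsupp.degree_single] at hu ⊢
  have hcolon : (J.colon (Ideal.span {(X i : MvPolynomial σ K)})).colon
      (Ideal.span {monomial u' (1 : K)}) = p := by
    rw [Ideal.colon_span_singleton_colon_span_singleton, X, monomial_mul, one_mul, hJ]
  exact (vNumber_le_of_colon_eq (by omega) (isHomogeneous_monomial _ rfl) hp hcolon).trans_lt
    (by omega)

theorem exists_vNumber_colon_X_lt {E : Set (σ →₀ ℕ)} (hI : (monomialIdeal K E).IsRadical)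
    (h : 2 ≤ vNumber (monomialIdeal K E)) :
    ∃ i, vNumber ((monomialIdeal K E).colon (Ideal.span {(X i : MvPolynomial σ K)})) <
      vNumber (monomialIdeal K E) := by
  obtain ⟨f, hf, p, hp, hfp⟩ :=
    exists_isHomogeneous_colon_eq_of_vNumber_ne_zero (I := monomialIdeal K E) (by omega)
  obtain ⟨u, hu, hup⟩ := exists_mem_support_colon_monomial_eq hI hp.isPrime hfp
  have hdeg : u.degree = vNumber (monomialIdeal K E) := by
    have := hf (mem_support_iff.mp hu)
    rwa [Finsupp.degree_eq_weight_one]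
  obtain ⟨i, hi⟩ : ∃ i, u i ≠ 0 := by
    by_contra! hu0
    rw [show u = 0 from Finsupp.ext hu0, map_zero] at hdeg
    omega
  exact ⟨i, hdeg ▸ vNumber_colon_X_lt_degree hp.isPrime hup hi (by omega)⟩

end VNumber

namespace SimpleGraph

variable {V : Type*}

def edgeExponents (G : SimpleGraph V) : Set (V →₀ ℕ) :=
  {u | ∃ i j, G.Adj i j ∧ u = Finsupp.single i 1 + Finsupp.single j 1}

theorem gEdgeIdeal_eq_monomialIdeal (K : Type*) [Field K] (G : SimpleGraph V) :
    gEdgeIdeal K G = monomialIdeal K G.edgeExponents := by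
  have hX (i j : V) : (X i * X j : MvPolynomial V K) =
      monomial (Finsupp.single i 1 + Finsupp.single j 1) 1 := by
    rw [X, X, monomial_mul, one_mul]
  unfold gEdgeIdeal monomialIdeal
  congr 1
  ext m
  constructor
  · rintro ⟨i, j, hij, rfl⟩
    exact ⟨_, ⟨i, j, hij, rfl⟩, (hX i j).symm⟩
  · rintro ⟨u, ⟨i, j, hij, rfl⟩, rfl⟩
    exact ⟨i, j, hij, (hX i j).symm⟩

theorem edgeExponents_le_one (G : SimpleGraph V) : ∀ u ∈ G.edgeExponents, ∀ k, u k ≤ 1 := by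
  rintro _ ⟨i, j, hij, rfl⟩ k
  simp only [Finsupp.add_apply, Finsupp.single_apply]
  split_ifs with hi hj <;> first | omega | exact absurd (hi.trans hj.symm) hij.ne

end SimpleGraph

/-- If `v(I(G)) ≥ 2` for a graph `G`, then there is a vertex `i` with
`v(I : t_i) < v(I)`. -/
theorem exists_vertex_vNumber_colon_lt {K : Type*} [Field K] {s : ℕ}
    (G : SimpleGraph (Fin s)) (h : 2 ≤ vNumber (gEdgeIdeal K G)) :
    ∃ i : Fin s, vNumber (Submodule.colon (gEdgeIdeal K G)
        (Ideal.span {(X i : MvPolynomial (Fin s) K)})) <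
      vNumber (gEdgeIdeal K G) := by
  rw [G.gEdgeIdeal_eq_monomialIdeal K] at h ⊢
  exact exists_vNumber_colon_X_lt (isRadical_monomialIdeal G.edgeExponents_le_one) h
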